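/- (Vector-valued Hoeffding/McDiarmid-type bound, Shawe-Taylor–Cristianini) Let ζ₁,…,ζ_M be i.i.d. random vectors in ℝ^N with E[ζ] = 0, E[ζζᵀ] = I, and ‖ζ‖₂² ≤ R² almost surely. Then for any δ ∈ (0,1), with probability at least 1 − δ, ‖(1/M)∑_{i=1}^M ζ_i‖₂² ≤ (R²/M)(2 + √(2 log(1/δ)))². -/

import Mathlib

/-!
Changing one summand `ζᵢ` moves `‖∑ ζᵢ‖` by at most `R`, so McDiarmid's bounded-differences
argument applies. Integrating out one independent summand turns a `K`-Lipschitz `f` into its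
average `x ↦ E f (x + ζ)`, again `K`-Lipschitz, and Hoeffding's lemma bounds the conditional
moment generating function at each step; hence `‖∑ ζᵢ‖ - E ‖∑ ζᵢ‖` is sub-Gaussian with variance
proxy `M R²`. Independence and `E ζᵢ = 0` give `E ‖∑ ζᵢ‖² = ∑ E ‖ζᵢ‖² ≤ M R²`, so
`E ‖∑ ζᵢ‖ ≤ √M R`, and the Chernoff bound at `x = √(2 log (1 / δ))` finishes the proof.
-/

open MeasureTheory ProbabilityTheory Real
open scoped NNReal

lemma LipschitzWith.mem_Icc_of_dist_le {E : Type*} [PseudoMetricSpace E] {K : ℝ≥0} {f : E → ℝ}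
    (hf : LipschitzWith K f) {x y : E} {C : ℝ} (h : dist x y ≤ C) :
    f x ∈ Set.Icc (f y - K * C) (f y + K * C) := by
  have := (hf.dist_le_mul x y).trans (mul_le_mul_of_nonneg_left h K.2)
  rw [Real.dist_eq, abs_le] at this
  constructor <;> linarith

lemma sq_norm_inv_smul_le {V : Type*} [NormedAddCommGroup V] [NormedSpace ℝ V] {m a : ℝ}
    (hm : 0 < m) {v : V} (hv : ‖v‖ ≤ √m * a) : ‖m⁻¹ • v‖ ^ 2 ≤ a ^ 2 / m := by
  have hsq : (√m * a / m) ^ 2 = a ^ 2 / m := by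
    rw [div_pow, mul_pow, sq_sqrt hm.le]
    field_simp
  rw [norm_smul, norm_inv, norm_of_nonneg hm.le, inv_mul_eq_div, ← hsq]
  gcongr

section NormedGroup

variable {E : Type*} [NormedAddCommGroup E] {Ω : Type*} [MeasurableSpace Ω] {P : Measure Ω}

lemma LipschitzWith.ae_comp_mem_Icc {K : ℝ≥0} {f : E → ℝ} (hf : LipschitzWith K f)
    {Y : Ω → E} {C : ℝ} (hY : ∀ᵐ ω ∂P, ‖Y ω‖ ≤ C) :
    ∀ᵐ ω ∂P, f (Y ω) ∈ Set.Icc (f 0 - K * C) (f 0 + K * C) := by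
  filter_upwards [hY] with ω hω
  exact hf.mem_Icc_of_dist_le (by simpa using hω)

lemma ae_norm_sum_le {ι : Type*} {ζ : ι → Ω → E} {R : ℝ} (hR : ∀ i, ∀ᵐ ω ∂P, ‖ζ i ω‖ ≤ R)
    (s : Finset ι) : ∀ᵐ ω ∂P, ‖∑ i ∈ s, ζ i ω‖ ≤ s.card * R := by
  filter_upwards [(Filter.eventually_all_finset s).2 fun i _ => hR i] with ω hω
  exact (norm_sum_le _ _).trans (by simpa using Finset.sum_le_card_nsmul s _ R hω)

variable [MeasurableSpace E] [BorelSpace E]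

lemma LipschitzWith.integral_comp_add {μ : Measure E} [IsProbabilityMeasure μ] {K : ℝ≥0}
    {f : E → ℝ} (hf : LipschitzWith K f) :
    LipschitzWith K (fun x => ∫ w, f (x + w) ∂μ) := by
  have hdiff : ∀ x y w, ‖f (x + w) - f (y + w)‖ ≤ K * dist x y := fun x y w => by
    simpa [← Real.dist_eq, dist_add_right] using hf.dist_le_mul (x + w) (y + w)
  have hint : ∀ x y, Integrable (fun w => f (x + w)) μ → Integrable (fun w => f (y + w)) μ :=
    fun x y hx => (hx.sub ((integrable_const _).mono'
      ((hf.continuous.comp (continuous_const_add x)).aestronglyMeasurable.sub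
        (hf.continuous.comp (continuous_const_add y)).aestronglyMeasurable)
      (.of_forall (hdiff x y)))).congr (.of_forall fun w => by simp)
  refine LipschitzWith.of_dist_le_mul fun x y => ?_
  by_cases hx : Integrable (fun w => f (x + w)) μ
  · rw [Real.dist_eq, ← integral_sub hx (hint x y hx), ← Real.norm_eq_abs]
    simpa using norm_integral_le_of_norm_le_const (μ := μ) (.of_forall (hdiff x y))
  · simp only [integral_undef hx, integral_undef (mt (hint y x) hx), dist_self]
    positivity

lemma integral_exp_mul_comp_const_add_le {μ : Measure E} [IsProbabilityMeasure μ] {R : ℝ≥0}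
    (hμ : ∀ᵐ w ∂μ, ‖w‖ ≤ R) {K : ℝ≥0} {f : E → ℝ} (hf : LipschitzWith K f) (x : E) (t : ℝ) :
    ∫ w, exp (t * f (x + w)) ∂μ ≤ exp (t * ∫ w, f (x + w) ∂μ + (K * R) ^ 2 * t ^ 2 / 2) := by
  have hIcc : ∀ᵐ w ∂μ, f (x + w) ∈ Set.Icc (f x - K * R) (f x + K * R) := by
    filter_upwards [hμ] with w hw
    exact hf.mem_Icc_of_dist_le (by simpa using hw)
  have hsub := (hasSubgaussianMGF_of_mem_Icc
    (hf.continuous.comp (continuous_const_add x)).aemeasurable hIcc).mgf_le t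
  have hc : ((‖f x + K * R - (f x - K * R)‖₊ / 2) ^ 2 : ℝ≥0) = ((K * R) ^ 2 : ℝ) := by
    rw [show f x + K * R - (f x - K * R) = 2 * (K * R) by ring]
    simp [nnnorm_mul]
  rw [hc] at hsub
  set m := ∫ w, f (x + w) ∂μ
  calc ∫ w, exp (t * f (x + w)) ∂μ = exp (t * m) * mgf (fun w => f (x + w) - m) μ t := by
        rw [mgf, ← integral_const_mul]
        congr with w
        rw [← exp_add]
        ring_nf
    _ ≤ exp (t * m) * exp ((K * R) ^ 2 * t ^ 2 / 2) := by gcongr; exact hsub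
    _ = _ := (exp_add _ _).symm

variable [SecondCountableTopology E]

lemma ProbabilityTheory.IndepFun.integral_comp_add [IsFiniteMeasure P] {X Y : Ω → E}
    (hXY : IndepFun X Y P) (hX : AEMeasurable X P) (hY : AEMeasurable Y P) {g : E → ℝ}
    (hg : StronglyMeasurable g) (hint : Integrable (fun ω => g (X ω + Y ω)) P) :
    ∫ ω, g (X ω + Y ω) ∂P = ∫ ω, ∫ y, g (X ω + y) ∂(P.map Y) ∂P := by
  have hG : StronglyMeasurable fun p : E × E => g (p.1 + p.2) := hg.comp_measurable measurable_add
  have hmap := hXY.map_prod_eq_prod_map_map hX hY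
  have hXY' : AEMeasurable (fun ω => (X ω, Y ω)) P := hX.prodMk hY
  rw [← integral_map hXY' hG.aestronglyMeasurable, hmap, integral_prod, integral_map hX]
  · exact hG.integral_prod_right'.aestronglyMeasurable
  · rw [← hmap, integrable_map_measure hG.aestronglyMeasurable hXY']
    exact hint

variable [IsProbabilityMeasure P]

lemma ProbabilityTheory.IndepFun.integral_exp_mul_comp_add_le {X Y : Ω → E}
    (hXY : IndepFun X Y P) (hX : Measurable X) (hY : Measurable Y) {C : ℝ}
    (hXC : ∀ᵐ ω ∂P, ‖X ω‖ ≤ C) {R : ℝ≥0} (hYR : ∀ᵐ ω ∂P, ‖Y ω‖ ≤ R) {K : ℝ≥0} {f : E → ℝ}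
    (hf : LipschitzWith K f) (t : ℝ) :
    ∫ ω, exp (t * f (X ω + Y ω)) ∂P ≤
      exp ((K * R) ^ 2 * t ^ 2 / 2) * ∫ ω, exp (t * ∫ y, f (X ω + y) ∂(P.map Y)) ∂P := by
  have := Measure.isProbabilityMeasure_map (μ := P) hY.aemeasurable
  have hμR : ∀ᵐ y ∂(P.map Y), ‖y‖ ≤ R :=
    (ae_map_iff hY.aemeasurable (measurableSet_le measurable_norm measurable_const)).2 hYR
  have hXY_bd : ∀ᵐ ω ∂P, ‖X ω + Y ω‖ ≤ C + R := by
    filter_upwards [hXC, hYR] with ω h1 h2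
    exact (norm_add_le _ _).trans (add_le_add h1 h2)
  have hg := hf.integral_comp_add (μ := P.map Y)
  have hfc := hf.continuous
  have hgc := hg.continuous
  rw [hXY.integral_comp_add hX.aemeasurable hY.aemeasurable
    (by fun_prop : Continuous fun x => exp (t * f x)).stronglyMeasurable
    (integrable_exp_mul_of_mem_Icc (by fun_prop) (hf.ae_comp_mem_Icc hXY_bd)),
    ← integral_const_mul]
  refine integral_mono_of_nonneg (.of_forall fun ω => by positivity)
    ((integrable_exp_mul_of_mem_Icc (hgc.measurable.comp hX).aemeasurable
      (hg.ae_comp_mem_Icc hXC)).const_mul _)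
    (.of_forall fun ω => ?_)
  dsimp only
  rw [← exp_add, add_comm]
  exact integral_exp_mul_comp_const_add_le hμR hf (X ω) t

variable {ι : Type*} {ζ : ι → Ω → E}

theorem integral_exp_mul_comp_sum_le (hmeas : ∀ i, Measurable (ζ i)) (hindep : iIndepFun ζ P)
    {R : ℝ≥0} (hR : ∀ i, ∀ᵐ ω ∂P, ‖ζ i ω‖ ≤ R) (s : Finset ι) {K : ℝ≥0} {f : E → ℝ}
    (hf : LipschitzWith K f) (t : ℝ) :
    ∫ ω, exp (t * f (∑ i ∈ s, ζ i ω)) ∂P ≤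
      exp (t * ∫ ω, f (∑ i ∈ s, ζ i ω) ∂P + s.card * (K * R) ^ 2 * t ^ 2 / 2) := by
  classical
  induction s using Finset.induction_on generalizing f with
  | empty => simp
  | insert a s ha ih =>
    set S := fun ω => ∑ i ∈ s, ζ i ω
    have hS : Measurable S := Finset.measurable_sum s fun i _ => hmeas i
    have hind : IndepFun S (ζ a) P := by
      simpa [S, Finset.sum_fn] using hindep.indepFun_finsetSum_of_notMem hmeas ha
    have := Measure.isProbabilityMeasure_map (μ := P) (hmeas a).aemeasurable
    have hg := hf.integral_comp_add (μ := P.map (ζ a))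
    have hSa_bd : ∀ᵐ ω ∂P, ‖S ω + ζ a ω‖ ≤ s.card * R + R := by
      filter_upwards [ae_norm_sum_le hR s, hR a] with ω h1 h2
      exact (norm_add_le _ _).trans (add_le_add h1 h2)
    have hmean : ∫ ω, f (S ω + ζ a ω) ∂P = ∫ ω, ∫ y, f (S ω + y) ∂(P.map (ζ a)) ∂P :=
      hind.integral_comp_add hS.aemeasurable (hmeas a).aemeasurable
        hf.continuous.stronglyMeasurable
        (Integrable.of_mem_Icc _ _ (hf.continuous.measurable.comp (hS.add (hmeas a))).aemeasurable
          (hf.ae_comp_mem_Icc hSa_bd))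
    simp_rw [Finset.sum_insert ha, add_comm (ζ a _)]
    calc ∫ ω, exp (t * f (S ω + ζ a ω)) ∂P
        ≤ exp ((K * R) ^ 2 * t ^ 2 / 2) * ∫ ω, exp (t * ∫ y, f (S ω + y) ∂(P.map (ζ a))) ∂P :=
          hind.integral_exp_mul_comp_add_le hS (hmeas a) (ae_norm_sum_le hR s) (hR a) hf t
      _ ≤ exp ((K * R) ^ 2 * t ^ 2 / 2) * exp (t * ∫ ω, ∫ y, f (S ω + y) ∂(P.map (ζ a)) ∂P +
            s.card * (K * R) ^ 2 * t ^ 2 / 2) := by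
          gcongr
          exact ih hg
      _ = _ := by
          rw [hmean, ← exp_add, Finset.card_insert_of_notMem ha]
          push_cast
          ring_nf

theorem hasSubgaussianMGF_comp_sum_sub_integral (hmeas : ∀ i, Measurable (ζ i))
    (hindep : iIndepFun ζ P) {R : ℝ≥0} (hR : ∀ i, ∀ᵐ ω ∂P, ‖ζ i ω‖ ≤ R) (s : Finset ι)
    {K : ℝ≥0} {f : E → ℝ} (hf : LipschitzWith K f) :
    HasSubgaussianMGF (fun ω => f (∑ i ∈ s, ζ i ω) - ∫ ω, f (∑ i ∈ s, ζ i ω) ∂P)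
      (s.card * (K * R) ^ 2) P where
  integrable_exp_mul t := by
    have hIcc := hf.ae_comp_mem_Icc (ae_norm_sum_le hR s)
    exact integrable_exp_mul_of_mem_Icc
      ((hf.continuous.measurable.comp (Finset.measurable_sum s fun i _ => hmeas i)).sub_const
        _).aemeasurable (hIcc.mono fun _ h => ⟨sub_le_sub_right h.1 _, sub_le_sub_right h.2 _⟩)
  mgf_le t := by
    set m := ∫ ω, f (∑ i ∈ s, ζ i ω) ∂P
    calc mgf (fun ω => f (∑ i ∈ s, ζ i ω) - m) P t
        = exp (-(t * m)) * ∫ ω, exp (t * f (∑ i ∈ s, ζ i ω)) ∂P := by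
          rw [mgf, ← integral_const_mul]
          congr with ω
          rw [← exp_add]
          ring_nf
      _ ≤ exp (-(t * m)) * exp (t * m + s.card * (K * R) ^ 2 * t ^ 2 / 2) := by
          gcongr
          exact integral_exp_mul_comp_sum_le hmeas hindep hR s hf t
      _ = _ := by
          rw [← exp_add]
          push_cast
          ring_nf

end NormedGroup

section InnerProductSpace

variable {F : Type*} [NormedAddCommGroup F] [InnerProductSpace ℝ F] [CompleteSpace F]
  [MeasurableSpace F] [BorelSpace F] {Ω : Type*} [MeasurableSpace Ω] {P : Measure Ω}
  [IsProbabilityMeasure P]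

lemma ProbabilityTheory.IndepFun.integral_norm_add_sq {X Y : Ω → F} (hXY : IndepFun X Y P)
    (hX : MemLp X 2 P) (hY : MemLp Y 2 P) (hY0 : ∫ ω, Y ω ∂P = 0) :
    ∫ ω, ‖X ω + Y ω‖ ^ 2 ∂P = ∫ ω, ‖X ω‖ ^ 2 ∂P + ∫ ω, ‖Y ω‖ ^ 2 ∂P := by
  have hX2 := hX.integrable_norm_pow' (p := 2)
  have hY2 := hY.integrable_norm_pow' (p := 2)
  have hinner : Integrable (fun ω => 2 * inner ℝ (X ω) (Y ω)) P := by
    refine (hX2.fun_add hY2).mono' ((hX.1.inner hY.1).const_mul 2) (.of_forall fun ω => ?_)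
    have := abs_real_inner_le_norm (X ω) (Y ω)
    rw [norm_mul, Real.norm_eq_abs, Real.norm_eq_abs, abs_two]
    nlinarith [sq_nonneg (‖X ω‖ - ‖Y ω‖)]
  have hinner0 : ∫ ω, 2 * inner ℝ (X ω) (Y ω) ∂P = 0 := by
    have h : ∫ ω, inner ℝ (X ω) (Y ω) ∂P = inner ℝ (∫ ω, X ω ∂P) (∫ ω, Y ω ∂P) :=
      hXY.integral_bilin (hX.integrable one_le_two) (hY.integrable one_le_two) (innerSL ℝ)
    rw [integral_const_mul, h, hY0, inner_zero_right, mul_zero]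
  simp_rw [norm_add_sq_real]
  rw [integral_add (hX2.fun_add hinner) hY2, integral_add hX2 hinner, hinner0, add_zero]

variable [SecondCountableTopology F] {ι : Type*} {ζ : ι → Ω → F}

theorem integral_norm_sum_sq (hmeas : ∀ i, Measurable (ζ i)) (hindep : iIndepFun ζ P)
    (hL2 : ∀ i, MemLp (ζ i) 2 P) (hmean : ∀ i, ∫ ω, ζ i ω ∂P = 0) (s : Finset ι) :
    ∫ ω, ‖∑ i ∈ s, ζ i ω‖ ^ 2 ∂P = ∑ i ∈ s, ∫ ω, ‖ζ i ω‖ ^ 2 ∂P := by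
  classical
  induction s using Finset.induction_on with
  | empty => simp
  | insert a s ha ih =>
    have hind : IndepFun (fun ω => ∑ i ∈ s, ζ i ω) (ζ a) P := by
      simpa [Finset.sum_fn] using hindep.indepFun_finsetSum_of_notMem hmeas ha
    simp_rw [Finset.sum_insert ha, add_comm (ζ a _)]
    rw [hind.integral_norm_add_sq (memLp_finsetSum s fun i _ => hL2 i) (hL2 a) (hmean a), ih,
      add_comm]

theorem integral_norm_sum_le (hmeas : ∀ i, Measurable (ζ i)) (hindep : iIndepFun ζ P)
    (hmean : ∀ i, ∫ ω, ζ i ω ∂P = 0) {R : ℝ≥0} (hR : ∀ i, ∀ᵐ ω ∂P, ‖ζ i ω‖ ≤ R)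
    (s : Finset ι) : ∫ ω, ‖∑ i ∈ s, ζ i ω‖ ∂P ≤ √s.card * R := by
  have hL2 : ∀ i, MemLp (ζ i) 2 P := fun i => .of_bound (hmeas i).aestronglyMeasurable R (hR i)
  have hvar := variance_nonneg (fun ω => ‖∑ i ∈ s, ζ i ω‖) P
  rw [variance_eq_sub (memLp_finsetSum s fun i _ => hL2 i).norm] at hvar
  have hsq : ∫ ω, ‖∑ i ∈ s, ζ i ω‖ ^ 2 ∂P ≤ s.card * R ^ 2 := by
    rw [integral_norm_sum_sq hmeas hindep hL2 hmean]
    refine (Finset.sum_le_card_nsmul s _ ((R : ℝ) ^ 2) fun i _ => ?_).trans_eq (nsmul_eq_mul _ _)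
    calc ∫ ω, ‖ζ i ω‖ ^ 2 ∂P ≤ ∫ _, (R : ℝ) ^ 2 ∂P := by
          refine integral_mono_ae ((hL2 i).integrable_norm_pow' (p := 2)) (integrable_const _) ?_
          filter_upwards [hR i] with ω hω
          exact pow_le_pow_left₀ (norm_nonneg _) hω 2
      _ = (R : ℝ) ^ 2 := by simp
  rw [← Real.sqrt_sq R.coe_nonneg, ← Real.sqrt_mul (Nat.cast_nonneg _),
    Real.le_sqrt (integral_nonneg fun _ => norm_nonneg _) (by positivity)]
  simp only [Pi.pow_apply] at hvar
  linarith

theorem measureReal_lt_norm_sum_le (hmeas : ∀ i, Measurable (ζ i)) (hindep : iIndepFun ζ P)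
    (hmean : ∀ i, ∫ ω, ζ i ω ∂P = 0) {R : ℝ≥0} (hR : ∀ i, ∀ᵐ ω ∂P, ‖ζ i ω‖ ≤ R)
    (s : Finset ι) {x : ℝ} (hx : 0 ≤ x) :
    P.real {ω | √s.card * R * (1 + x) < ‖∑ i ∈ s, ζ i ω‖} ≤ exp (-x ^ 2 / 2) := by
  have hsub := hasSubgaussianMGF_comp_sum_sub_integral hmeas hindep hR s lipschitzWith_one_norm
  have hm := integral_norm_sum_le hmeas hindep hmean hR s
  have hσ : 0 ≤ √s.card * (R : ℝ) := by positivity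
  obtain hc | hc := eq_zero_or_pos (s.card * (1 * R) ^ 2 : ℝ≥0)
  -- with variance proxy `0`, `measure_ge_le` only gives the bound `exp (-ε ^ 2 / 0) = 1`
  · rw [hc] at hsub
    refine le_of_eq_of_le ?_ (exp_pos _).le
    rw [measureReal_def, measure_eq_zero_iff_ae_notMem.2, ENNReal.toReal_zero]
    filter_upwards [hsub.ae_eq_zero_of_hasSubgaussianMGF_zero] with ω hω
    simp only [Pi.zero_apply, sub_eq_zero] at hω
    simp only [not_lt, hω]
    nlinarith
  · refine (measureReal_mono fun ω hω => ?_).trans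
      ((hsub.measure_ge_le (ε := √s.card * R * x) (by positivity)).trans_eq ?_)
    · simp only [Set.mem_ofPred_eq] at hω ⊢
      nlinarith
    · obtain ⟨hn, hR0⟩ : (s.card : ℝ) ≠ 0 ∧ (R : ℝ) ≠ 0 := by simpa using hc.ne'
      push_cast
      rw [mul_pow, mul_pow, Real.sq_sqrt (Nat.cast_nonneg _)]
      field_simp

end InnerProductSpace

theorem stmt_9_general {Ω : Type*} [MeasurableSpace Ω] (P : Measure Ω)
    [IsProbabilityMeasure P] (N M : ℕ) (hM : 0 < M)
    (ζ : Fin M → Ω → EuclideanSpace ℝ (Fin N))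
    (hmeas : ∀ i, Measurable (ζ i))
    (hindep : iIndepFun ζ P)
    (hmean : ∀ i, ∫ ω, ζ i ω ∂P = 0)
    (R : ℝ) (hbound : ∀ i, ∀ᵐ ω ∂P, ‖ζ i ω‖ ^ 2 ≤ R ^ 2)
    (δ : ℝ) (hδ : 0 < δ) (hδ1 : δ < 1) :
    ENNReal.ofReal (1 - δ) ≤
      P {ω | ‖(M : ℝ)⁻¹ • ∑ i, ζ i ω‖ ^ 2 ≤
        (R ^ 2 / M) * (2 + Real.sqrt (2 * Real.log (1 / δ))) ^ 2} := by
  have hζR : ∀ i, ∀ᵐ ω ∂P, ‖ζ i ω‖ ≤ ‖R‖₊ := fun i =>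
    (hbound i).mono fun ω h => by simpa using sq_le_sq.1 h
  set x := √(2 * log (1 / δ))
  have hδx : exp (-x ^ 2 / 2) = δ := by
    have hlog : 0 ≤ log (1 / δ) := log_nonneg (one_le_one_div hδ hδ1.le)
    rw [Real.sq_sqrt (by positivity), one_div, log_inv]
    simp [exp_log hδ]
  have htail : P.real {ω | √M * ‖R‖₊ * (1 + x) < ‖∑ i, ζ i ω‖} ≤ δ := by
    simpa [hδx] using
      measureReal_lt_norm_sum_le hmeas hindep hmean hζR Finset.univ (x := x) (sqrt_nonneg _)
  set G := {ω | ‖(M : ℝ)⁻¹ • ∑ i, ζ i ω‖ ^ 2 ≤ (R ^ 2 / M) * (2 + x) ^ 2}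
  have hcompl : Gᶜ ⊆ {ω | √M * ‖R‖₊ * (1 + x) < ‖∑ i, ζ i ω‖} := fun ω hω => by
    by_contra h
    have hle : ‖∑ i, ζ i ω‖ ≤ √M * (‖R‖₊ * (2 + x)) := by
      refine (not_lt.1 h).trans ?_
      rw [← mul_assoc]
      gcongr
      norm_num
    refine hω ?_
    simpa [G, mul_pow, div_mul_eq_mul_div] using sq_norm_inv_smul_le (Nat.cast_pos.2 hM) hle
  have hG : MeasurableSet G := measurableSet_le (by fun_prop) measurable_const
  rw [← ofReal_measureReal]
  refine ENNReal.ofReal_le_ofReal ?_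
  linarith [measureReal_compl (μ := P) hG, measureReal_mono (μ := P) hcompl, probReal_univ (μ := P)]

theorem stmt_9 {Ω : Type*} [MeasurableSpace Ω] (P : Measure Ω)
    [IsProbabilityMeasure P] (N M : ℕ) (hM : 0 < M)
    (ζ : Fin M → Ω → EuclideanSpace ℝ (Fin N))
    (hmeas : ∀ i, Measurable (ζ i))
    (hindep : iIndepFun ζ P)
    (hident : ∀ i j, Measure.map (ζ i) P = Measure.map (ζ j) P)
    (hmean : ∀ i, ∫ ω, ζ i ω ∂P = 0)
    (hcov : ∀ i a b, ∫ ω, ζ i ω a * ζ i ω b ∂P = if a = b then (1 : ℝ) else 0)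
    (R : ℝ) (hbound : ∀ i, ∀ᵐ ω ∂P, ‖ζ i ω‖ ^ 2 ≤ R ^ 2)
    (δ : ℝ) (hδ : 0 < δ) (hδ1 : δ < 1) :
    ENNReal.ofReal (1 - δ) ≤
      P {ω | ‖(M : ℝ)⁻¹ • ∑ i, ζ i ω‖ ^ 2 ≤
        (R ^ 2 / M) * (2 + Real.sqrt (2 * Real.log (1 / δ))) ^ 2} :=
  stmt_9_general P N M hM ζ hmeas hindep hmean R hbound δ hδ hδ1
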